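/- In the cable algebra 𝒜ₙ, for every m ≥ 1 and every nondecreasing sequence 0 ≤ i_1 ≤ i_2 ≤ … ≤ i_m ≤ n−1, write i_1 + … + i_m = qm + r with natural numbers q, r and 0 ≤ r < m. Then there exists a natural number e such that a_{i_1}·a_{i_2}⋯a_{i_m} = 𝐔^e · a_q^{m−r} · a_{q+1}^r in 𝒜ₙ. (Here q ≤ n−1 automatically, q+1 ≤ n−1 whenever r > 0, and a_{q+1}^0 is interpreted as 1 when r = 0.) -/
import Mathlib


/-- Variables of the cable algebra `𝒜ₙ`: `U₁,…,Uₙ`, `V₁,…,Vₙ`, `𝐔`, `a₀,…,a_{n−1}`. -/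
inductive CableVar (n : ℕ) : Type
  | U : Fin n → CableVar n
  | V : Fin n → CableVar n
  | UU : CableVar n
  | a : Fin n → CableVar n

open MvPolynomial Finset in
/-- The defining relations of the cable algebra `𝒜ₙ` over `𝔽 = ℤ/2ℤ`:
(i) `UᵢVᵢ = 𝐔`; (ii) `U_I·a_{k−1} = V_{Ī}·a_k` for `I` of cardinality `k`, `1 ≤ k ≤ n−1`;
(iii) `aᵢaⱼ = 𝐔^{kl−ij}·aₖaₗ` whenever `i + j = k + l` and `i ≤ k ≤ l ≤ j`. -/
def cableRelations (n : ℕ) : Set (MvPolynomial (CableVar n) (ZMod 2)) :=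
  {p | ∃ i : Fin n, p = X (CableVar.U i) * X (CableVar.V i) - X CableVar.UU} ∪
  {p | ∃ (I : Finset (Fin n)) (h1 : 1 ≤ I.card) (h2 : I.card ≤ n - 1),
      p = (∏ i ∈ I, X (CableVar.U i)) * X (CableVar.a ⟨I.card - 1, by omega⟩) -
        (∏ j ∈ Iᶜ, X (CableVar.V j)) * X (CableVar.a ⟨I.card, by omega⟩)} ∪
  {p | ∃ i j k l : Fin n, (i : ℕ) + (j : ℕ) = (k : ℕ) + (l : ℕ) ∧ i ≤ k ∧ k ≤ l ∧ l ≤ j ∧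
      p = X (CableVar.a i) * X (CableVar.a j) -
        X CableVar.UU ^ ((k : ℕ) * (l : ℕ) - (i : ℕ) * (j : ℕ)) *
          (X (CableVar.a k) * X (CableVar.a l))}

/-- The cable algebra `𝒜ₙ` over `𝔽 = ℤ/2ℤ`. -/
abbrev CableAlg (n : ℕ) : Type :=
  MvPolynomial (CableVar n) (ZMod 2) ⧸ Ideal.span (cableRelations n)

/-- The class of the generator `a_k` in the cable algebra `𝒜ₙ` (interpreted as `0` for the
out-of-range indices `k ≥ n`, which below only ever occur with exponent `0`, so that the
corresponding factor is `a_{q+1}^0 = 1`). -/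
noncomputable def aGen (n : ℕ) (k : ℕ) : CableAlg n :=
  if h : k < n then
    Ideal.Quotient.mk (Ideal.span (cableRelations n)) (MvPolynomial.X (CableVar.a ⟨k, h⟩))
  else 0


open MvPolynomial in
lemma cable_rel3 (n : ℕ) {i j k l : ℕ} (hij : i + j = k + l) (hik : i ≤ k) (hkl : k ≤ l)
    (hlj : l ≤ j) (hjn : j < n) :
    aGen n i * aGen n j =
      (Ideal.Quotient.mk (Ideal.span (cableRelations n)) (X CableVar.UU)) ^ (k * l - i * j) *
        (aGen n k * aGen n l) := by
  have hin : i < n := lt_of_le_of_lt (hik.trans (hkl.trans hlj)) hjn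
  have hkn : k < n := lt_of_le_of_lt (hkl.trans hlj) hjn
  have hln : l < n := lt_of_le_of_lt hlj hjn
  rw [aGen, aGen, aGen, aGen, dif_pos hin, dif_pos hjn, dif_pos hkn, dif_pos hln,
    ← map_mul, ← map_pow, ← map_mul, ← map_mul, Ideal.Quotient.eq]
  refine Ideal.subset_span (Or.inr ?_)
  exact ⟨⟨i, hin⟩, ⟨j, hjn⟩, ⟨k, hkn⟩, ⟨l, hln⟩, hij, hik, hkl, hlj, rfl⟩

lemma cable_bal {α : Type*} [CommMonoid α] (f : ℕ → α) (q : ℕ) :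
    ∀ s : Multiset ℕ, (∀ x ∈ s, x = q ∨ x = q + 1) →
      (s.map f).prod =
          f q ^ (Multiset.card s - Multiset.count (q + 1) s) *
            f (q + 1) ^ Multiset.count (q + 1) s ∧
        s.sum = q * Multiset.card s + Multiset.count (q + 1) s := by
  intro s
  induction s using Multiset.induction_on with
  | empty => simp
  | cons x s ih =>
    intro hx
    obtain ⟨h1, h2⟩ := ih (fun y hy => hx y (Multiset.mem_cons_of_mem hy))
    have hc : Multiset.count (q + 1) s ≤ Multiset.card s := Multiset.count_le_card _ _
    rcases hx x (Multiset.mem_cons_self x s) with h | h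
    · subst h
      have hne : x ≠ x + 1 := by omega
      rw [Multiset.count_cons_of_ne (by omega : (x+1 : ℕ) ≠ x)] at *
      constructor
      · rw [Multiset.map_cons, Multiset.prod_cons, h1, Multiset.card_cons]
        rw [show Multiset.card s + 1 - Multiset.count (x + 1) s
            = (Multiset.card s - Multiset.count (x + 1) s) + 1 by omega, pow_succ]
        simp [mul_comm, mul_left_comm, mul_assoc]
      · rw [Multiset.sum_cons, Multiset.card_cons, h2]; ring
    · subst h
      rw [Multiset.count_cons_self]
      constructor
      · rw [Multiset.map_cons, Multiset.prod_cons, h1, Multiset.card_cons]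
        rw [show Multiset.card s + 1 - (Multiset.count (q + 1) s + 1)
            = Multiset.card s - Multiset.count (q + 1) s by omega, pow_succ]
        simp [mul_comm, mul_left_comm, mul_assoc]
      · rw [Multiset.sum_cons, Multiset.card_cons, h2]; ring

open MvPolynomial in
lemma cable_main (n : ℕ) (N : ℕ) :
    ∀ s : Multiset ℕ, (s.map (fun x => x ^ 2)).sum ≤ N → s ≠ 0 → (∀ x ∈ s, x < n) →
      ∃ e : ℕ,
        (s.map (aGen n)).prod =
          (Ideal.Quotient.mk (Ideal.span (cableRelations n)) (X CableVar.UU)) ^ e *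
            aGen n (s.sum / Multiset.card s) ^
              (Multiset.card s - s.sum % Multiset.card s) *
            aGen n (s.sum / Multiset.card s + 1) ^ (s.sum % Multiset.card s) := by
  induction N using Nat.strong_induction_on with
  | _ N ih =>
  intro s hN hs0 hsn
  set q := s.sum / Multiset.card s with hq
  set r := s.sum % Multiset.card s with hr
  have hcard : 0 < Multiset.card s := Multiset.card_pos.mpr hs0
  have hdm : q * Multiset.card s + r = s.sum := by
    rw [hq, hr, mul_comm]
    exact Nat.div_add_mod _ _
  have hrlt : r < Multiset.card s := Nat.mod_lt _ hcard
  by_cases hbal : ∀ x ∈ s, x = q ∨ x = q + 1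
  · obtain ⟨h1, h2⟩ := cable_bal (aGen n) q s hbal
    have hcnt : Multiset.count (q + 1) s = r := by
      have hc : Multiset.count (q + 1) s ≤ Multiset.card s := Multiset.count_le_card _ _
      rcases Nat.lt_or_ge (Multiset.count (q + 1) s) (Multiset.card s) with h | h
      · omega
      · exfalso
        have : Multiset.count (q + 1) s = Multiset.card s := le_antisymm hc h
        rw [this] at h2
        have : s.sum / Multiset.card s = q + 1 := by
          rw [h2]; rw [show q * Multiset.card s + Multiset.card s
            = (q+1) * Multiset.card s by ring]
          exact Nat.mul_div_cancel _ hcard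
        omega
    refine ⟨0, ?_⟩
    rw [h1, hcnt, pow_zero, one_mul]
  · push_neg at hbal
    obtain ⟨x, hxs, hxq, hxq1⟩ := hbal
    -- find a, b ∈ s with a + 2 ≤ b
    have key : ∃ a, a ∈ s ∧ ∃ b, b ∈ s.erase a ∧ a + 2 ≤ b := by
      rcases Nat.lt_or_ge x q with hlt | hge
      · -- x < q; find b > q in s.erase x
        by_contra hcon
        push_neg at hcon
        have hall : ∀ y ∈ s.erase x, y ≤ q := by
          intro y hy
          by_contra hgt
          have := hcon x hxs y hy
          omega
        have hsum : (s.erase x).sum ≤ Multiset.card (s.erase x) • q :=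
          Multiset.sum_le_card_nsmul _ _ hall
        have hce : Multiset.card (s.erase x) = Multiset.card s - 1 :=
          Multiset.card_erase_of_mem hxs
        have hse : x + (s.erase x).sum = s.sum := by
          rw [← Multiset.sum_cons, Multiset.cons_erase hxs]
        simp only [smul_eq_mul, hce] at hsum
        obtain ⟨k, hk⟩ : ∃ k, Multiset.card s = k + 1 := ⟨Multiset.card s - 1, by omega⟩
        rw [hk] at hsum hdm
        simp only [Nat.add_sub_cancel] at hsum
        nlinarith [hsum, hse, hdm, hlt]
      · -- x ≥ q, and x ≠ q, x ≠ q+1, so x ≥ q + 2; find b ≤ q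
        have hx2 : q + 2 ≤ x := by omega
        by_contra hcon
        push_neg at hcon
        have hall : ∀ y ∈ s.erase x, q + 1 ≤ y := by
          intro y hy
          by_contra hgt
          have := hcon y (Multiset.mem_of_mem_erase hy) x
            ((Multiset.mem_erase_of_ne (by omega)).mpr hxs)
          omega
        have hsum : Multiset.card (s.erase x) • (q + 1) ≤ (s.erase x).sum :=
          Multiset.card_nsmul_le_sum hall
        have hce : Multiset.card (s.erase x) = Multiset.card s - 1 :=
          Multiset.card_erase_of_mem hxs
        have hse : x + (s.erase x).sum = s.sum := by
          rw [← Multiset.sum_cons, Multiset.cons_erase hxs]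
        simp only [smul_eq_mul, hce] at hsum
        obtain ⟨k, hk⟩ : ∃ k, Multiset.card s = k + 1 := ⟨Multiset.card s - 1, by omega⟩
        rw [hk] at hsum hdm
        simp only [Nat.add_sub_cancel] at hsum
        have hrk : r ≤ k := by omega
        nlinarith [hsum, hse, hdm, hx2, hrk]
    obtain ⟨a, has, b, hbs, hab⟩ := key
    obtain ⟨c, rfl⟩ : ∃ c, b = c + 1 := ⟨b - 1, by omega⟩
    set t := (s.erase a).erase (c + 1) with ht
    have hs_eq : s = a ::ₘ (c + 1) ::ₘ t := by
      rw [ht, Multiset.cons_erase hbs, Multiset.cons_erase has]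
    have hbn : c + 1 < n := hsn _ (Multiset.mem_of_mem_erase hbs)
    have hac : a + 1 ≤ c := by omega
    set s' := (a + 1) ::ₘ c ::ₘ t with hs'
    have hcard' : Multiset.card s' = Multiset.card s := by
      rw [hs_eq, hs']; simp
    have hsum' : s'.sum = s.sum := by
      rw [hs_eq, hs']; simp only [Multiset.sum_cons]; omega
    have hmeas : (s'.map (fun x => x ^ 2)).sum < (s.map (fun x => x ^ 2)).sum := by
      rw [hs_eq, hs']
      simp only [Multiset.map_cons, Multiset.sum_cons]
      have : (a + 1) ^ 2 + c ^ 2 < a ^ 2 + (c + 1) ^ 2 := by nlinarith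
      omega
    have hsn' : ∀ x ∈ s', x < n := by
      intro y hy
      rw [hs'] at hy
      rcases Multiset.mem_cons.mp hy with h | h
      · omega
      rcases Multiset.mem_cons.mp h with h | h
      · omega
      · exact hsn y (by rw [hs_eq]; exact Multiset.mem_cons_of_mem (Multiset.mem_cons_of_mem h))
    have hs0' : s' ≠ 0 := by rw [hs']; exact Multiset.cons_ne_zero
    obtain ⟨e', he'⟩ := ih _ (lt_of_lt_of_le hmeas hN) s' le_rfl hs0' hsn'
    have hrel : aGen n a * aGen n (c + 1) =
        (Ideal.Quotient.mk (Ideal.span (cableRelations n)) (X CableVar.UU)) ^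
            ((a + 1) * c - a * (c + 1)) * (aGen n (a + 1) * aGen n c) :=
      cable_rel3 n (by ring) (by omega) hac (by omega) hbn
    refine ⟨(a + 1) * c - a * (c + 1) + e', ?_⟩
    have hps : (s.map (aGen n)).prod =
        aGen n a * aGen n (c + 1) * (t.map (aGen n)).prod := by
      rw [hs_eq]; simp [Multiset.prod_cons, mul_assoc]
    have hps' : (s'.map (aGen n)).prod =
        aGen n (a + 1) * aGen n c * (t.map (aGen n)).prod := by
      rw [hs']; simp [Multiset.prod_cons, mul_assoc]
    rw [hps, hrel, mul_assoc, ← hps', he', pow_add, hsum', hcard', ← hq, ← hr]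
    ring

/-- In the cable algebra `𝒜ₙ`, for every `m ≥ 1` and every nondecreasing sequence
`0 ≤ i₁ ≤ … ≤ i_m ≤ n−1` with `i₁ + … + i_m = qm + r`, `0 ≤ r < m`, there is a natural
number `e` with `a_{i₁}⋯a_{i_m} = 𝐔^e · a_q^{m−r} · a_{q+1}^r`. -/
theorem stmt_10 (n : ℕ) (hn : 1 ≤ n) (m : ℕ) (hm : 1 ≤ m)
    (idx : Fin m → ℕ) (hmono : Monotone idx) (hbound : ∀ j, idx j ≤ n - 1) :
    ∃ e : ℕ,
      (∏ j : Fin m, aGen n (idx j)) =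
        (Ideal.Quotient.mk (Ideal.span (cableRelations n))
              (MvPolynomial.X CableVar.UU)) ^ e *
          aGen n ((∑ j : Fin m, idx j) / m) ^ (m - (∑ j : Fin m, idx j) % m) *
          aGen n ((∑ j : Fin m, idx j) / m + 1) ^ ((∑ j : Fin m, idx j) % m) := by
  classical
  set s : Multiset ℕ := Multiset.map idx Finset.univ.val with hs
  have hcard : Multiset.card s = m := by simp [hs]
  have hsum : s.sum = ∑ j : Fin m, idx j := by
    rw [hs]; rfl
  have hprod : (s.map (aGen n)).prod = ∏ j : Fin m, aGen n (idx j) := by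
    rw [hs, Multiset.map_map]; rfl
  have hs0 : s ≠ 0 := by
    intro h
    have := congrArg Multiset.card h
    rw [hcard] at this
    simp at this
    omega
  have hlt : ∀ x ∈ s, x < n := by
    intro x hx
    rw [hs] at hx
    obtain ⟨j, _, rfl⟩ := Multiset.mem_map.mp hx
    have := hbound j
    omega
  obtain ⟨e, he⟩ := cable_main n _ s le_rfl hs0 hlt
  refine ⟨e, ?_⟩
  rw [← hprod, he, hcard, hsum]
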